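/- Let θ₁, θ₂ ∈ H^∞(D) with |θ₁(e^{it})|² + |θ₂(e^{it})|² = 1 a.e. on the unit circle, and let S = {(θ₁f, θ₂f) : f ∈ H²(D)} ⊆ H²(D) ⊕ H²(D). Then S is a closed subspace invariant under M_z ⊕ M_z, and the compression of M_z ⊕ M_z to the quotient (H²(D) ⊕ H²(D))/S is an isometry if and only if S is a reducing subspace of M_z ⊕ M_z, which holds if and only if θ₁ and θ₂ are constant functions. -/

import Mathlib

set_option synthInstance.maxHeartbeats 1000000

open Metric

noncomputable section

/-- The Hardy space `H²(𝔻)`, modeled as `ℓ²(ℕ)` of Taylor coefficients. -/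
abbrev H2 := lp (fun _ : ℕ => ℂ) 2

/-- `H²(𝔻) ⊕ H²(𝔻)` with its Hilbert-space (`ℓ²`) norm. -/
abbrev HH := WithLp 2 (H2 × H2)

/-- The subspace `S = {(θ₁ f, θ₂ f) : f ∈ H²(𝔻)}`, i.e. the range of
`f ↦ (M₁ f, M₂ f)` where `Mᵢ` is multiplication by `θᵢ`. -/
def Smod (M₁ M₂ : H2 →L[ℂ] H2) : Submodule ℂ HH :=
  LinearMap.range ((WithLp.linearEquiv 2 ℂ (H2 × H2)).symm.toLinearMap ∘ₗ
    ((M₁ : H2 →ₗ[ℂ] H2).prod (M₂ : H2 →ₗ[ℂ] H2)))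


/-!
Write `W f = (θ₁ f, θ₂ f)`. The hypothesis makes `W` an isometry, so `S = range W` is closed, and
`V ∘ W = W ∘ M_z` because multiplication operators commute with `M_z`; hence `V S ⊆ S`. As `V` is
an isometry, `‖P_{S^⊥} V x‖ = ‖V x‖` forces `V x ∈ S^⊥`, so the compression is isometric exactly
when `S^⊥` is `V`-invariant. In that case `(θ₁, θ₂) = W 1` is orthogonal to `V S = W (z H²)` and to
`V S^⊥ ⊆ S^⊥`, hence to the whole range `z H² ⊕ z H²` of `V`, so `θ₁` and `θ₂` are constant.
Conversely, for constants `c₁, c₂` the complement `S^⊥ = {x | c̄₁ x₁ + c̄₂ x₂ = 0}` is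
`V`-invariant.
-/

open scoped InnerProduct

section Compression

variable {𝕜 E : Type*} [RCLike 𝕜] [NormedAddCommGroup E] [InnerProductSpace 𝕜 E]

theorem norm_orthogonalProjectionOnto_map_eq_iff_mapsTo (K : Submodule 𝕜 E)
    [K.HasOrthogonalProjection] (V : E →ₗᵢ[𝕜] E) :
    (∀ x ∈ K, ‖K.orthogonalProjectionOnto (V x)‖ = ‖x‖) ↔ ∀ x ∈ K, V x ∈ K :=
  forall₂_congr fun x _ => by
    rw [← V.norm_map, K.mem_iff_norm_starProjection]
    rfl

theorem inner_map_eq_zero_of_orthogonal_mapsTo {K : Submodule 𝕜 E} [K.HasOrthogonalProjection]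
    (V : E →ₗ[𝕜] E) (hV : ∀ x ∈ Kᗮ, V x ∈ Kᗮ) {u : E} (hu : u ∈ K)
    (huV : ∀ x ∈ K, inner 𝕜 u (V x) = 0) (x : E) : inner 𝕜 u (V x) = 0 := by
  rw [← K.starProjection_add_starProjection_orthogonal x, map_add, inner_add_right,
    huV _ (K.starProjection_apply_mem x),
    K.inner_right_of_mem_orthogonal hu (hV _ (Kᗮ.starProjection_apply_mem x)), add_zero]

end Compression

namespace H2

def eval (f : H2) (z : ℂ) : ℂ := ∑' n, f n * z ^ n

def one : H2 := lp.single 2 0 1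

theorem one_apply_zero : one 0 = 1 := lp.single_apply_self 2 0 1

theorem one_apply_of_ne_zero {n : ℕ} (hn : n ≠ 0) : one n = 0 := lp.single_apply_ne 2 0 1 hn

theorem inner_one_left (f : H2) : inner ℂ one f = f 0 := by
  simp [one, lp.inner_single_left]

theorem summable_coeff_mul_pow (f : H2) {z : ℂ} (hz : ‖z‖ < 1) :
    Summable fun n => f n * z ^ n := by
  refine Summable.of_norm_bounded ((summable_geometric_of_lt_one (norm_nonneg z) hz).mul_left ‖f‖)
    fun n => ?_
  rw [norm_mul, norm_pow]
  gcongr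
  exact lp.norm_apply_le_norm two_ne_zero f n

theorem hasFPowerSeriesOnBall_eval (f : H2) :
    HasFPowerSeriesOnBall (eval f) (FormalMultilinearSeries.ofScalars ℂ f) 0 1 where
  r_le := FormalMultilinearSeries.le_radius_of_bound _ ‖f‖ fun n => by
    simpa [FormalMultilinearSeries.ofScalars_norm] using lp.norm_apply_le_norm two_ne_zero f n
  r_pos := one_pos
  hasSum {y} hy := by
    have hy : ‖y‖ < 1 := by simpa [← ofReal_norm] using hy
    simpa [eval, FormalMultilinearSeries.ofScalars_apply_eq, mul_comm] using
      (summable_coeff_mul_pow f hy).hasSum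

theorem ext_of_eqOn_ball {f g : H2} (h : ∀ z ∈ ball (0 : ℂ) 1, eval f z = eval g z) : f = g := by
  have hfg : eval f =ᶠ[nhds 0] eval g := Filter.mem_of_superset (ball_mem_nhds 0 one_pos) h
  have := (hasFPowerSeriesOnBall_eval f).hasFPowerSeriesAt.eq_formalMultilinearSeries_of_eventually
    (hasFPowerSeriesOnBall_eval g).hasFPowerSeriesAt hfg
  exact lp.ext ((FormalMultilinearSeries.ofScalars_series_eq_iff ℂ _ _).mp this)

theorem eval_one (z : ℂ) : eval one z = 1 := by
  rw [eval, tsum_eq_single 0 fun n hn => by rw [one_apply_of_ne_zero hn, zero_mul], one_apply_zero,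
    pow_zero, mul_one]

theorem eval_smul (c : ℂ) (f : H2) (z : ℂ) : eval (c • f) z = c * eval f z := by
  simp only [eval, lp.coeFn_smul, Pi.smul_apply, smul_eq_mul, mul_assoc, tsum_mul_left]

def IsMultiplier (θ : ℂ → ℂ) (M : H2 →L[ℂ] H2) : Prop :=
  ∀ f : H2, ∀ z ∈ ball (0 : ℂ) 1, eval (M f) z = θ z * eval f z

namespace IsMultiplier

variable {θ : ℂ → ℂ} {M : H2 →L[ℂ] H2}

theorem eqOn_ball_of_apply_one (hM : IsMultiplier θ M) {c : ℂ} (h : M one = c • one) :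
    ∀ z ∈ ball (0 : ℂ) 1, θ z = c := fun z hz => by
  simpa [h, eval_smul, eval_one] using (hM one z hz).symm

theorem apply_eq_smul (hM : IsMultiplier θ M) {c : ℂ} (hθ : ∀ z ∈ ball (0 : ℂ) 1, θ z = c)
    (f : H2) : M f = c • f :=
  ext_of_eqOn_ball fun z hz => by rw [hM f z hz, hθ z hz, eval_smul]

theorem adjoint_apply_eq_smul (hM : IsMultiplier θ M) {c : ℂ}
    (hθ : ∀ z ∈ ball (0 : ℂ) 1, θ z = c) (f : H2) : (M†) f = star c • f := by
  rw [show M = c • ContinuousLinearMap.id ℂ H2 from ContinuousLinearMap.ext (hM.apply_eq_smul hθ),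
    map_smulₛₗ, ContinuousLinearMap.adjoint_id]
  rfl

end IsMultiplier

def backwardShift (f : H2) : H2 :=
  ⟨fun n => f (n + 1), memℓp_gen <|
    ((lp.memℓp f).summable (by norm_num)).comp_injective (add_left_injective 1)⟩

def IsShift (Sh : H2 →ₗᵢ[ℂ] H2) : Prop :=
  ∀ f : H2, Sh f 0 = 0 ∧ ∀ n : ℕ, Sh f (n + 1) = f n

namespace IsShift

variable {Sh : H2 →ₗᵢ[ℂ] H2}

theorem eval_apply (hSh : IsShift Sh) (f : H2) {z : ℂ} (hz : z ∈ ball (0 : ℂ) 1) :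
    eval (Sh f) z = z * eval f z := by
  have hz : ‖z‖ < 1 := by simpa using hz
  rw [eval, (summable_coeff_mul_pow (Sh f) hz).tsum_eq_zero_add, (hSh f).1, zero_mul, zero_add,
    eval, ← tsum_mul_left]
  exact tsum_congr fun n => by rw [(hSh f).2 n, pow_succ]; ring

theorem commute_of_isMultiplier (hSh : IsShift Sh) {θ : ℂ → ℂ} {M : H2 →L[ℂ] H2}
    (hM : IsMultiplier θ M) (f : H2) : M (Sh f) = Sh (M f) :=
  ext_of_eqOn_ball fun z hz => by
    rw [hM _ z hz, hSh.eval_apply _ hz, hSh.eval_apply _ hz, hM _ z hz]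
    ring

theorem smul_one_add_apply_backwardShift (hSh : IsShift Sh) (f : H2) :
    f 0 • one + Sh (backwardShift f) = f := by
  refine lp.ext (funext fun n => ?_)
  rcases n with _ | n
  all_goals rw [lp.coeFn_add, Pi.add_apply, lp.coeFn_smul, Pi.smul_apply, smul_eq_mul]
  · rw [one_apply_zero, (hSh _).1, mul_one, add_zero]
  · rw [one_apply_of_ne_zero n.succ_ne_zero, (hSh _).2 n, mul_zero, zero_add]
    rfl

theorem inner_one_apply (hSh : IsShift Sh) (f : H2) : inner ℂ one (Sh f) = 0 := by
  rw [inner_one_left, (hSh f).1]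

theorem eq_smul_one_of_forall_inner_apply_eq_zero (hSh : IsShift Sh) {f : H2}
    (hf : ∀ g, inner ℂ f (Sh g) = 0) : f = f 0 • one := by
  have hr : Sh (backwardShift f) = f - f 0 • one :=
    eq_sub_of_add_eq' (hSh.smul_one_add_apply_backwardShift f)
  have h0 : Sh (backwardShift f) = 0 := by
    rw [← inner_self_eq_zero (𝕜 := ℂ)]
    nth_rw 1 [hr]
    rw [inner_sub_left, inner_smul_left, hf, hSh.inner_one_apply, mul_zero, sub_zero]
  rwa [hr, sub_eq_zero] at h0

end IsShift

end H2

open H2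

def pairMap (M₁ M₂ : H2 →L[ℂ] H2) : H2 →ₗ[ℂ] HH :=
  (WithLp.linearEquiv 2 ℂ (H2 × H2)).symm.toLinearMap ∘ₗ
    ((M₁ : H2 →ₗ[ℂ] H2).prod (M₂ : H2 →ₗ[ℂ] H2))

section Pair

variable {M₁ M₂ : H2 →L[ℂ] H2}

theorem smod_eq_range_pairMap : Smod M₁ M₂ = LinearMap.range (pairMap M₁ M₂) := rfl

@[simp]
theorem pairMap_fst (f : H2) : (pairMap M₁ M₂ f).fst = M₁ f := rfl

@[simp]
theorem pairMap_snd (f : H2) : (pairMap M₁ M₂ f).snd = M₂ f := rfl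

theorem inner_pairMap_left (f : H2) (x : HH) :
    inner ℂ (pairMap M₁ M₂ f) x = inner ℂ f ((M₁†) x.fst + (M₂†) x.snd) := by
  rw [inner_add_right, ContinuousLinearMap.adjoint_inner_right,
    ContinuousLinearMap.adjoint_inner_right]
  rfl

theorem mem_orthogonal_smod_iff (x : HH) :
    x ∈ (Smod M₁ M₂)ᗮ ↔ (M₁†) x.fst + (M₂†) x.snd = 0 := by
  simp only [Submodule.mem_orthogonal, smod_eq_range_pairMap, LinearMap.mem_range,
    forall_exists_index, forall_apply_eq_imp_iff, inner_pairMap_left]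
  rw [ext_iff_inner_left ℂ (y := 0)]
  simp only [inner_zero_right]

def pairIsometry (hiso : ∀ f : H2, ‖M₁ f‖ ^ 2 + ‖M₂ f‖ ^ 2 = ‖f‖ ^ 2) : H2 →ₗᵢ[ℂ] HH where
  toLinearMap := pairMap M₁ M₂
  norm_map' f := by
    rw [← sq_eq_sq₀ (norm_nonneg _) (norm_nonneg _), WithLp.prod_norm_sq_eq_of_L2]
    exact hiso f

theorem isClosed_smod (hiso : ∀ f : H2, ‖M₁ f‖ ^ 2 + ‖M₂ f‖ ^ 2 = ‖f‖ ^ 2) :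
    IsClosed (Smod M₁ M₂ : Set HH) := by
  rw [smod_eq_range_pairMap, LinearMap.coe_range]
  exact (pairIsometry hiso).isometry.isClosedEmbedding.isClosed_range

theorem inner_pairMap_pairMap (hiso : ∀ f : H2, ‖M₁ f‖ ^ 2 + ‖M₂ f‖ ^ 2 = ‖f‖ ^ 2)
    (f g : H2) : inner ℂ (pairMap M₁ M₂ f) (pairMap M₁ M₂ g) = inner ℂ f g :=
  (pairIsometry hiso).inner_map_map f g

end Pair

def IsDiagonal (Sh : H2 →ₗᵢ[ℂ] H2) (V : HH →ₗᵢ[ℂ] HH) : Prop :=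
  ∀ x : HH, WithLp.equiv 2 (H2 × H2) (V x) =
    (Sh (WithLp.equiv 2 (H2 × H2) x).1, Sh (WithLp.equiv 2 (H2 × H2) x).2)

namespace IsDiagonal

variable {Sh : H2 →ₗᵢ[ℂ] H2} {V : HH →ₗᵢ[ℂ] HH} {M₁ M₂ : H2 →L[ℂ] H2} {θ₁ θ₂ : ℂ → ℂ}

theorem fst_apply (hV : IsDiagonal Sh V) (x : HH) : (V x).fst = Sh x.fst :=
  congrArg Prod.fst (hV x)

theorem snd_apply (hV : IsDiagonal Sh V) (x : HH) : (V x).snd = Sh x.snd :=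
  congrArg Prod.snd (hV x)

theorem apply_pairMap (hV : IsDiagonal Sh V) (hSh : IsShift Sh) (hM₁ : IsMultiplier θ₁ M₁)
    (hM₂ : IsMultiplier θ₂ M₂) (f : H2) : V (pairMap M₁ M₂ f) = pairMap M₁ M₂ (Sh f) :=
  WithLp.ofLp_injective 2 <| Prod.ext
    ((hV.fst_apply _).trans (hSh.commute_of_isMultiplier hM₁ f).symm)
    ((hV.snd_apply _).trans (hSh.commute_of_isMultiplier hM₂ f).symm)

theorem smod_mapsTo (hV : IsDiagonal Sh V) (hSh : IsShift Sh) (hM₁ : IsMultiplier θ₁ M₁)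
    (hM₂ : IsMultiplier θ₂ M₂) : ∀ x ∈ Smod M₁ M₂, V x ∈ Smod M₁ M₂ := by
  rintro _ ⟨f, rfl⟩
  exact ⟨Sh f, (hV.apply_pairMap hSh hM₁ hM₂ f).symm⟩

theorem orthogonal_smod_mapsTo_of_commute_adjoint (hV : IsDiagonal Sh V)
    (h₁ : ∀ f, (M₁†) (Sh f) = Sh ((M₁†) f)) (h₂ : ∀ f, (M₂†) (Sh f) = Sh ((M₂†) f)) :
    ∀ x ∈ (Smod M₁ M₂)ᗮ, V x ∈ (Smod M₁ M₂)ᗮ := by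
  intro x hx
  rw [mem_orthogonal_smod_iff] at hx ⊢
  rw [hV.fst_apply, hV.snd_apply, h₁, h₂, ← map_add, hx, map_zero]

theorem inner_apply_right (hV : IsDiagonal Sh V) (u x : HH) :
    inner ℂ u (V x) = inner ℂ u.fst (Sh x.fst) + inner ℂ u.snd (Sh x.snd) := by
  rw [WithLp.prod_inner_apply, ← hV.fst_apply, ← hV.snd_apply]
  rfl

theorem orthogonal_smod_mapsTo_of_eqOn_ball (hV : IsDiagonal Sh V) (hM₁ : IsMultiplier θ₁ M₁)
    (hM₂ : IsMultiplier θ₂ M₂) {c₁ c₂ : ℂ} (hθ₁ : ∀ z ∈ ball (0 : ℂ) 1, θ₁ z = c₁)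
    (hθ₂ : ∀ z ∈ ball (0 : ℂ) 1, θ₂ z = c₂) :
    ∀ x ∈ (Smod M₁ M₂)ᗮ, V x ∈ (Smod M₁ M₂)ᗮ :=
  hV.orthogonal_smod_mapsTo_of_commute_adjoint
    (fun f => by rw [hM₁.adjoint_apply_eq_smul hθ₁, hM₁.adjoint_apply_eq_smul hθ₁, Sh.map_smul])
    (fun f => by rw [hM₂.adjoint_apply_eq_smul hθ₂, hM₂.adjoint_apply_eq_smul hθ₂, Sh.map_smul])

theorem exists_eqOn_ball_of_orthogonal_smod_mapsTo (hV : IsDiagonal Sh V) (hSh : IsShift Sh)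
    (hM₁ : IsMultiplier θ₁ M₁) (hM₂ : IsMultiplier θ₂ M₂)
    (hiso : ∀ f : H2, ‖M₁ f‖ ^ 2 + ‖M₂ f‖ ^ 2 = ‖f‖ ^ 2)
    (hperp : ∀ x ∈ (Smod M₁ M₂)ᗮ, V x ∈ (Smod M₁ M₂)ᗮ) :
    (∃ c : ℂ, ∀ z ∈ ball (0 : ℂ) 1, θ₁ z = c) ∧ ∃ c : ℂ, ∀ z ∈ ball (0 : ℂ) 1, θ₂ z = c := by
  have : CompleteSpace (Smod M₁ M₂) := (isClosed_smod hiso).completeSpace_coe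
  -- `pairMap 1 = (θ₁, θ₂)` is orthogonal to `V (pairMap f) = pairMap (Sh f)` and to `V Sᗮ ⊆ Sᗮ`
  have horth : ∀ x, inner ℂ (pairMap M₁ M₂ one) (V x) = 0 :=
    inner_map_eq_zero_of_orthogonal_mapsTo V.toLinearMap hperp ⟨one, rfl⟩ <| by
      rintro _ ⟨f, rfl⟩
      exact (congrArg _ (hV.apply_pairMap hSh hM₁ hM₂ f)).trans
        ((inner_pairMap_pairMap hiso _ _).trans (hSh.inner_one_apply f))
  have h₁ : M₁ one = M₁ one 0 • one := hSh.eq_smul_one_of_forall_inner_apply_eq_zero fun g => by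
    simpa [hV.inner_apply_right] using horth (WithLp.toLp 2 (g, 0))
  have h₂ : M₂ one = M₂ one 0 • one := hSh.eq_smul_one_of_forall_inner_apply_eq_zero fun g => by
    simpa [hV.inner_apply_right] using horth (WithLp.toLp 2 (0, g))
  exact ⟨⟨_, hM₁.eqOn_ball_of_apply_one h₁⟩, ⟨_, hM₂.eqOn_ball_of_apply_one h₂⟩⟩

end IsDiagonal

theorem stmt12
    (Sh : H2 →ₗᵢ[ℂ] H2)
    (hSh : ∀ f : H2, (Sh f) 0 = 0 ∧ ∀ n : ℕ, (Sh f) (n + 1) = f n)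
    (θ₁ θ₂ : ℂ → ℂ)
    (M₁ M₂ : H2 →L[ℂ] H2)
    (hM₁ : ∀ f : H2, ∀ z ∈ ball (0:ℂ) 1,
      (∑' n : ℕ, (M₁ f) n * z ^ n) = θ₁ z * ∑' n : ℕ, f n * z ^ n)
    (hM₂ : ∀ f : H2, ∀ z ∈ ball (0:ℂ) 1,
      (∑' n : ℕ, (M₂ f) n * z ^ n) = θ₂ z * ∑' n : ℕ, f n * z ^ n)
    (hiso : ∀ f : H2, ‖M₁ f‖ ^ 2 + ‖M₂ f‖ ^ 2 = ‖f‖ ^ 2)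
    (V : HH →ₗᵢ[ℂ] HH)
    (hV : ∀ x : HH, WithLp.equiv 2 (H2 × H2) (V x) =
      (Sh (WithLp.equiv 2 (H2 × H2) x).1, Sh (WithLp.equiv 2 (H2 × H2) x).2)) :
    IsClosed ((Smod M₁ M₂ : Submodule ℂ HH) : Set HH) ∧
    (∀ x ∈ Smod M₁ M₂, V x ∈ Smod M₁ M₂) ∧
    ((∀ x ∈ (Smod M₁ M₂)ᗮ, ‖Submodule.orthogonalProjectionOnto (Smod M₁ M₂)ᗮ (V x)‖ = ‖x‖) ↔
      ((∀ x ∈ Smod M₁ M₂, V x ∈ Smod M₁ M₂) ∧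
        ∀ x ∈ (Smod M₁ M₂)ᗮ, V x ∈ (Smod M₁ M₂)ᗮ)) ∧
    (((∀ x ∈ Smod M₁ M₂, V x ∈ Smod M₁ M₂) ∧
        ∀ x ∈ (Smod M₁ M₂)ᗮ, V x ∈ (Smod M₁ M₂)ᗮ) ↔
      ((∃ c : ℂ, ∀ z ∈ ball (0:ℂ) 1, θ₁ z = c) ∧
        ∃ c : ℂ, ∀ z ∈ ball (0:ℂ) 1, θ₂ z = c)) := by
  have hSh : IsShift Sh := hSh
  have hM₁ : IsMultiplier θ₁ M₁ := hM₁
  have hM₂ : IsMultiplier θ₂ M₂ := hM₂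
  have hV : IsDiagonal Sh V := hV
  have hinv := hV.smod_mapsTo hSh hM₁ hM₂
  have : CompleteSpace (Smod M₁ M₂) := (isClosed_smod hiso).completeSpace_coe
  refine ⟨isClosed_smod hiso, hinv, ?_, ?_⟩
  · rw [norm_orthogonalProjectionOnto_map_eq_iff_mapsTo, and_iff_right hinv]
  · rw [and_iff_right hinv]
    exact ⟨hV.exists_eqOn_ball_of_orthogonal_smod_mapsTo hSh hM₁ hM₂ hiso,
      fun ⟨⟨_, hθ₁⟩, ⟨_, hθ₂⟩⟩ => hV.orthogonal_smod_mapsTo_of_eqOn_ball hM₁ hM₂ hθ₁ hθ₂⟩
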